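/- In a Δ-periodic temporal graph, under the assumptions that P is a fastest temporal path from u to v_i, Q is an alternative u-to-v_i path such that Q followed by R (from v_i to v) is a fastest u-to-v temporal path, and d(u, v_i, P) ≤ d(u, v_i, Q) and d(u, v, Q∪R) ≤ d(u, v, P∪R): the path P extended by the edge v_i v_{i−1} (the last edge of Q reversed) is strictly slower from u to v_{i−1} than the path Q with its last edge removed; formally d(u, v_{i−1}, P ∪ {v_i v_{i−1}}) > d(u, v_{i−1}, Q \ {v_i v_{i−1}}). -/

import Mathlib

/-- The residue of `a - b` modulo `Δ`, taken in `{1, …, Δ}` (value `Δ` when `a ≡ b (mod Δ)`). -/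
def resDelta (Δ : ℕ) (a b : ℤ) : ℤ :=
  if (a - b) % (Δ : ℤ) = 0 then (Δ : ℤ) else (a - b) % (Δ : ℤ)

/-- The starting time of the wasteless temporal traversal of a path whose edges carry the
labels `L` (period `Δ`), starting within the window `[t, t + Δ − 1]`: the first activation
of the first edge at a time `≥ t`. -/
def startT (Δ : ℕ) (t : ℤ) (L : List ℤ) : ℤ := t + (L.head! - t) % (Δ : ℤ)

/-- The arrival time of the wasteless temporal traversal of a path with edge labels `L`,
starting within the window `[t, t + Δ − 1]`: after the first edge, each edge is traversed
at its first activation strictly after the previous traversal time. -/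
def arrT (Δ : ℕ) (t : ℤ) (L : List ℤ) : ℤ :=
  L.tail.foldl (fun s l => s + resDelta Δ l s) (startT Δ t L)

/-- The duration of the wasteless temporal traversal of a path with edge labels `L`,
starting within the window `[t, t + Δ − 1]`. -/
def durT (Δ : ℕ) (t : ℤ) (L : List ℤ) : ℤ := arrT Δ t L - startT Δ t L + 1

/-!
Let `C` and `A` be the arrival times of `Q \ {v_i v_{i−1}}` and of `P`, and `next s` the first
activation of the edge `v_{i−1}v_i` strictly after `s`; `next` is monotone, commutes with shifts
by `Δ`, and all its values are congruent modulo `Δ`.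

If `next C ≤ A`, then `next A ≥ next C + Δ`, which outweighs the later start of `P` (less than
`Δ` after that of `Q`). Otherwise continuing along `R` from `A` arrives no later than from
`next C`, so the hypothesis that `Q ∪ R` is no slower than `P ∪ R` forces `P` and `Q` to start
together and both continuations to arrive together; the latter rules out `A + Δ ≤ next C`.
Hence `next C < next A + Δ`, i.e. `C < next A`.
-/

theorem Int.le_of_modEq_of_sub_lt {n a b : ℤ} (h : a ≡ b [ZMOD n]) (hab : b - n < a) :
    b ≤ a := by
  obtain ⟨k, hk⟩ := h.dvd
  rcases le_or_gt n 0 with hn | hn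
  · linarith
  · have : k < 1 := by nlinarith
    nlinarith

section Traversal

variable {Δ : ℕ}

/-- The first time strictly after `s` at which an edge with label `l` is active. -/
def nextActivation (Δ : ℕ) (l s : ℤ) : ℤ := s + resDelta Δ l s

def traverseFrom (Δ : ℕ) (L : List ℤ) (s : ℤ) : ℤ :=
  L.foldl (fun s l => nextActivation Δ l s) s

theorem lt_nextActivation (hΔ : 0 < Δ) (l s : ℤ) : s < nextActivation Δ l s := by
  unfold nextActivation resDelta
  split_ifs
  · omega
  · have := Int.emod_nonneg (l - s) (by omega : (Δ : ℤ) ≠ 0)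
    omega

theorem nextActivation_le (hΔ : 0 < Δ) (l s : ℤ) : nextActivation Δ l s ≤ s + Δ := by
  unfold nextActivation resDelta
  split_ifs
  · rfl
  · have := Int.emod_lt_of_pos (l - s) (by omega : (0 : ℤ) < Δ)
    omega

theorem nextActivation_modEq (l s : ℤ) : nextActivation Δ l s ≡ l [ZMOD Δ] := by
  unfold nextActivation resDelta
  split_ifs with h
  · exact Int.add_modulus_modEq_iff.mpr (Int.modEq_of_dvd (Int.dvd_of_emod_eq_zero h))
  · simpa only [add_sub_cancel] using (Int.mod_modEq (l - s) Δ).add_left s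

theorem nextActivation_modEq_nextActivation (l x y : ℤ) :
    nextActivation Δ l x ≡ nextActivation Δ l y [ZMOD Δ] :=
  (nextActivation_modEq l x).trans (nextActivation_modEq l y).symm

theorem nextActivation_add_self (l s : ℤ) :
    nextActivation Δ l (s + Δ) = nextActivation Δ l s + Δ := by
  have h : l - (s + Δ) = l - s + Δ * (-1) := by ring
  rw [nextActivation, nextActivation, resDelta, resDelta, h, Int.add_mul_emod_self_left]
  ring

theorem nextActivation_mono (hΔ : 0 < Δ) (l : ℤ) : Monotone (nextActivation Δ l) := by
  intro x y hxy
  refine Int.le_of_modEq_of_sub_lt (nextActivation_modEq_nextActivation l y x) ?_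
  linarith [nextActivation_le hΔ l x, lt_nextActivation hΔ l y]

theorem nextActivation_add_le (hΔ : 0 < Δ) {l x y : ℤ} (h : nextActivation Δ l x ≤ y) :
    nextActivation Δ l x + Δ ≤ nextActivation Δ l y := by
  refine Int.le_of_modEq_of_sub_lt
    (Int.modEq_add_modulus_iff.mpr (nextActivation_modEq_nextActivation l y x)) ?_
  linarith [lt_nextActivation hΔ l y]

theorem traverseFrom_cons (l : ℤ) (L : List ℤ) (s : ℤ) :
    traverseFrom Δ (l :: L) s = traverseFrom Δ L (nextActivation Δ l s) := rfl

theorem traverseFrom_mono (hΔ : 0 < Δ) (L : List ℤ) : Monotone (traverseFrom Δ L) := by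
  induction L with
  | nil => exact fun _ _ h => h
  | cons l L ih => exact ih.comp (nextActivation_mono hΔ l)

theorem traverseFrom_add_self (L : List ℤ) (s : ℤ) :
    traverseFrom Δ L (s + Δ) = traverseFrom Δ L s + Δ := by
  induction L generalizing s with
  | nil => rfl
  | cons l L ih => simp only [traverseFrom_cons, nextActivation_add_self, ih]

end Traversal

section Paths

variable {Δ : ℕ} {t : ℤ} {L : List ℤ}

theorem startT_self (h : L.head! = t) : startT Δ t L = t := by
  simp [startT, h]

theorem le_startT (hΔ : 0 < Δ) : t ≤ startT Δ t L := by
  have := Int.emod_nonneg (L.head! - t) (by omega : (Δ : ℤ) ≠ 0)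
  rw [startT]
  omega

theorem startT_lt (hΔ : 0 < Δ) : startT Δ t L < t + Δ := by
  have := Int.emod_lt_of_pos (L.head! - t) (by omega : (0 : ℤ) < Δ)
  rw [startT]
  omega

theorem startT_append (hL : L ≠ []) (M : List ℤ) : startT Δ t (L ++ M) = startT Δ t L := by
  rw [startT, startT, List.head!_append _ hL]

theorem arrT_append (hL : L ≠ []) (M : List ℤ) :
    arrT Δ t (L ++ M) = traverseFrom Δ M (arrT Δ t L) := by
  rw [arrT, arrT, startT_append hL, List.tail_append_of_ne_nil hL, List.foldl_append]
  rfl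

theorem durT_append (hL : L ≠ []) (M : List ℤ) :
    durT Δ t (L ++ M) = traverseFrom Δ M (arrT Δ t L) - startT Δ t L + 1 := by
  rw [durT, arrT_append hL, startT_append hL]

end Paths

theorem sub_lt_nextActivation_sub {Δ : ℕ} (hΔ : 0 < Δ) (R : List ℤ) {e tQ tP A C : ℤ}
    (hstart : tQ ≤ tP) (hstart' : tP < tQ + Δ)
    (h : traverseFrom Δ R (nextActivation Δ e C) - tQ ≤ traverseFrom Δ R A - tP) :
    C - tQ < nextActivation Δ e A - tP := by
  rcases le_or_gt (nextActivation Δ e C) A with hCA | hAC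
  · linarith [nextActivation_add_le hΔ hCA, lt_nextActivation hΔ e C]
  · have hsame_start : tP = tQ := by linarith [traverseFrom_mono hΔ R hAC.le]
    have hwithin : nextActivation Δ e C < A + Δ := by
      by_contra! hfar
      linarith [traverseFrom_add_self (Δ := Δ) R A, traverseFrom_mono hΔ R hfar]
    by_contra!
    linarith [nextActivation_add_le hΔ (l := e) (y := C) (by linarith), lt_nextActivation hΔ e A]

theorem stmt11_general (Δ : ℕ) (hΔ : 1 ≤ Δ)
    (LP LQ' LR : List ℤ) (e : ℤ) (hP : LP ≠ []) (hQ' : LQ' ≠ [])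
    (tv : ℤ) (htv : tv = (LQ' ++ [e]).head!)
    (h2 : durT Δ tv ((LQ' ++ [e]) ++ LR) ≤ durT Δ tv (LP ++ LR)) :
    durT Δ tv LQ' < durT Δ tv (LP ++ [e]) := by
  have hsQ : startT Δ tv LQ' = tv := startT_self (by rw [htv, List.head!_append _ hQ'])
  rw [List.append_assoc, durT_append hQ', durT_append hP, hsQ, List.singleton_append,
    traverseFrom_cons, add_le_add_iff_right] at h2
  rw [durT, durT_append hP, hsQ, add_lt_add_iff_right]
  exact sub_lt_nextActivation_sub hΔ LR (le_startT hΔ) (startT_lt hΔ) h2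

/-- Under the assumptions of the previous lemma — `P` a fastest path from `u` to `v_i`
(no slower than `Q`), and `Q` followed by `R` a fastest temporal path from `u` to `v`
(no slower than `P ∪ R`), where `Q = Q' ++ [e]` ends with the edge `e = v_{i−1}v_i` — the
path `P` extended by the reversed last edge of `Q` is strictly slower from `u` to `v_{i−1}`
than `Q` with its last edge removed:
`d(u, v_{i−1}, P ∪ {v_i v_{i−1}}) > d(u, v_{i−1}, Q \ {v_i v_{i−1}})`. -/
theorem stmt11 (Δ : ℕ) (hΔ : 1 ≤ Δ)
    (LP LQ' LR : List ℤ) (e : ℤ) (hP : LP ≠ []) (hQ' : LQ' ≠ []) (hR : LR ≠ [])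
    (hPval : ∀ l ∈ LP, l ∈ Finset.Icc (1 : ℤ) (Δ : ℤ))
    (hQval : ∀ l ∈ LQ', l ∈ Finset.Icc (1 : ℤ) (Δ : ℤ))
    (hRval : ∀ l ∈ LR, l ∈ Finset.Icc (1 : ℤ) (Δ : ℤ))
    (he : e ∈ Finset.Icc (1 : ℤ) (Δ : ℤ))
    (tv : ℤ) (htv : tv = (LQ' ++ [e]).head!)
    (h1 : durT Δ tv LP ≤ durT Δ tv (LQ' ++ [e]))
    (h2 : durT Δ tv ((LQ' ++ [e]) ++ LR) ≤ durT Δ tv (LP ++ LR)) :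
    durT Δ tv LQ' < durT Δ tv (LP ++ [e]) :=
  stmt11_general Δ hΔ LP LQ' LR e hP hQ' tv htv h2
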